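/- arXiv:1901.07917 — 2 statements merged into one kernel-verified Lean document; each statement's English description precedes it below -/
import Mathlib

section
/- If the set of exponents Λ admits an integral basis (i.e., every λⱼ ∈ Λ is a ℤ-linear combination of the basis elements), then two coefficient sequences are *∼-equivalent if and only if they are Bohr-equivalent, i.e., there exists a single ℚ-linear map ψ : V → ℝ (V the ℚ-span of Λ) with bⱼ = aⱼ e^{iψ(λⱼ)} for all j. -/
/-!
Every exponent lies in the group `A = ℤ g₁ + ℤ g₂ + ⋯`, so the phases `e^{iψ(λⱼ)}` of a
`ℚ`-linear `ψ` depend only on the character `e^{iψ}` of `A`. The characters of `A` form a closed,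
hence compact, subset of `ℝ → Circle`, and each condition `bⱼ = aⱼ χ(λⱼ)` is closed, so the
finite-stage solutions provided by `*∼` have a common solution `χ` (finite intersection property).
Because the `gₖ` are `ℚ`-independent, `χ = e^{iψ}` on `A` for the `ℚ`-linear `ψ` with
`ψ(gₖ) = arg χ(gₖ)`.
-/

noncomputable section

def StarEquiv (lam : ℕ → ℝ) (a b : ℕ → ℂ) : Prop :=
  ∀ n : ℕ, 1 ≤ n →
    ∃ ψ : (Submodule.span ℚ (lam '' {j : ℕ | j < n})) →ₗ[ℚ] ℝ,
      ∀ j : ℕ, ∀ hj : j < n,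
        b j = a j * Complex.exp
          (Complex.I * (ψ ⟨lam j, Submodule.subset_span (Set.mem_image_of_mem lam hj)⟩))

/-- Bohr equivalence of coefficient sequences: a single `ℚ`-linear map `ψ` on the `ℚ`-span of
all the exponents with `b j = a j * exp (i ψ (lam j))` for every `j`. -/
def BohrEquivSeq (lam : ℕ → ℝ) (a b : ℕ → ℂ) : Prop :=
  ∃ ψ : (Submodule.span ℚ (Set.range lam)) →ₗ[ℚ] ℝ,
    ∀ j : ℕ, b j = a j * Complex.exp
      (Complex.I * (ψ ⟨lam j, Submodule.subset_span (Set.mem_range_self j)⟩))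

open Set

section LinearExtension

variable {K V W : Type*} [Field K] [AddCommGroup V] [Module K V] [AddCommGroup W]
  [Module K W]

theorem LinearMap.exists_extend_apply {p : Submodule K V} (ψ : p →ₗ[K] W) :
    ∃ F : V →ₗ[K] W, ∀ x : p, F x = ψ x :=
  (LinearMap.exists_extend ψ).imp fun _ hF x => LinearMap.congr_fun hF x

theorem LinearIndependent.exists_linearMap_apply_eq {ι : Type*} {v : ι → V}
    (hv : LinearIndependent K v) (w : ι → W) : ∃ F : V →ₗ[K] W, ∀ i, F (v i) = w i := by
  obtain ⟨F, hF⟩ := LinearMap.exists_extend_apply ((Module.Basis.span hv).constr K w)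
  refine ⟨F, fun i => ?_⟩
  have := hF (Module.Basis.span hv i)
  rw [Module.Basis.constr_basis] at this
  rwa [Module.Basis.span_apply] at this

end LinearExtension

theorem IsCompact.exists_forall_mem_of_forall_exists_lt {X : Type*} [TopologicalSpace X]
    {K : Set X} (hK : IsCompact K) {C : ℕ → Set X} (hC : ∀ j, IsClosed (C j))
    (h : ∀ n, ∃ x ∈ K, ∀ j < n, x ∈ C j) : ∃ x ∈ K, ∀ j, x ∈ C j := by
  by_contra hne
  have hempty : K ∩ ⋂ j, C j = ∅ := by
    simpa [Set.eq_empty_iff_forall_notMem] using hne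
  obtain ⟨t, ht⟩ := hK.elim_finite_subfamily_closed C hC hempty
  obtain ⟨x, hxK, hxC⟩ := h (t.sup id + 1)
  refine Set.eq_empty_iff_forall_notMem.mp ht x ⟨hxK, Set.mem_iInter₂.mpr fun j hj => hxC j ?_⟩
  exact Nat.lt_succ_of_le (Finset.le_sup (f := id) hj)

section AddCharOn

variable {G M : Type*} [AddGroup G] [Group M]

/-- Characters of `A` are encoded as functions on all of `G`, so that for `M = Circle` they form
a closed subset of the compact space `G → Circle`. -/
def IsAddCharOn (A : Set G) (χ : G → M) : Prop :=
  ∀ x ∈ A, ∀ y ∈ A, χ (x + y) = χ x * χ y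

theorem IsAddCharOn.map_zero {A : AddSubgroup G} {χ : G → M} (hχ : IsAddCharOn A χ) :
    χ 0 = 1 := by
  have := hχ 0 A.zero_mem 0 A.zero_mem
  rwa [add_zero, left_eq_mul] at this

theorem IsAddCharOn.map_neg {A : AddSubgroup G} {χ : G → M} (hχ : IsAddCharOn A χ) {x : G}
    (hx : x ∈ A) : χ (-x) = (χ x)⁻¹ := by
  have := hχ x hx (-x) (A.neg_mem hx)
  rw [add_neg_cancel, hχ.map_zero] at this
  exact eq_inv_of_mul_eq_one_right this.symm

theorem IsAddCharOn.eqOn_closure {s : Set G} {χ₁ χ₂ : G → M}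
    (h₁ : IsAddCharOn (AddSubgroup.closure s : Set G) χ₁)
    (h₂ : IsAddCharOn (AddSubgroup.closure s : Set G) χ₂) (hs : EqOn χ₁ χ₂ s) :
    EqOn χ₁ χ₂ (AddSubgroup.closure s) := by
  intro x hx
  induction hx using AddSubgroup.closure_induction with
  | mem x hx => exact hs hx
  | zero => rw [h₁.map_zero, h₂.map_zero]
  | add x y hx hy ihx ihy => rw [h₁ x hx y hy, h₂ x hx y hy, ihx, ihy]
  | neg x hx ih => rw [h₁.map_neg hx, h₂.map_neg hx, ih]

theorem isClosed_setOf_isAddCharOn [TopologicalSpace M] [ContinuousMul M] [T2Space M]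
    (A : Set G) : IsClosed {χ : G → M | IsAddCharOn A χ} := by
  simp only [IsAddCharOn, Set.ofPred_forall]
  exact isClosed_iInter fun x => isClosed_iInter fun _ => isClosed_iInter fun y =>
    isClosed_iInter fun _ => isClosed_eq (continuous_apply _)
      ((continuous_apply x).mul (continuous_apply y))

end AddCharOn

theorem isAddCharOn_circleExp_comp {G 𝓕 : Type*} [AddGroup G] [FunLike 𝓕 G ℝ]
    [AddHomClass 𝓕 G ℝ] (F : 𝓕) (A : Set G) : IsAddCharOn A fun x => Circle.exp (F x) :=
  fun x _ y _ => by simp only [map_add, Circle.exp_add]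

theorem IsAddCharOn.exists_linearMap_circleExp_eq {K ι : Type*} [Field K] [Module K ℝ]
    {g : ι → ℝ} (hg : LinearIndependent K g) {χ : ℝ → Circle}
    (hχ : IsAddCharOn (AddSubgroup.closure (range g) : Set ℝ) χ) :
    ∃ F : ℝ →ₗ[K] ℝ, EqOn (fun x => Circle.exp (F x)) χ (AddSubgroup.closure (range g)) := by
  obtain ⟨F, hF⟩ := hg.exists_linearMap_apply_eq fun k => Complex.arg (χ (g k))
  refine ⟨F, (isAddCharOn_circleExp_comp F _).eqOn_closure hχ ?_⟩
  rintro _ ⟨k, rfl⟩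
  simp only [hF, Circle.exp_arg]

theorem starEquiv_iff_forall_exists_linearMap {lam : ℕ → ℝ} {a b : ℕ → ℂ} :
    StarEquiv lam a b ↔
      ∀ n, ∃ F : ℝ →ₗ[ℚ] ℝ, ∀ j < n, b j = a j * Circle.exp (F (lam j)) := by
  constructor
  · intro h n
    obtain ⟨ψ, hψ⟩ := h (n + 1) n.succ_pos
    obtain ⟨F, hF⟩ := LinearMap.exists_extend_apply ψ
    refine ⟨F, fun j hj => ?_⟩
    rw [hψ j (Nat.lt_succ_of_lt hj), ← hF, Circle.coe_exp, mul_comm Complex.I]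
  · intro h n _
    obtain ⟨F, hF⟩ := h n
    refine ⟨F ∘ₗ Submodule.subtype _, fun j hj => ?_⟩
    rw [hF j hj, Circle.coe_exp, mul_comm Complex.I]
    rfl

theorem bohrEquivSeq_iff_exists_linearMap {lam : ℕ → ℝ} {a b : ℕ → ℂ} :
    BohrEquivSeq lam a b ↔ ∃ F : ℝ →ₗ[ℚ] ℝ, ∀ j, b j = a j * Circle.exp (F (lam j)) := by
  constructor
  · rintro ⟨ψ, hψ⟩
    obtain ⟨F, hF⟩ := LinearMap.exists_extend_apply ψ
    refine ⟨F, fun j => ?_⟩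
    rw [hψ j, ← hF, Circle.coe_exp, mul_comm Complex.I]
  · rintro ⟨F, hF⟩
    refine ⟨F ∘ₗ Submodule.subtype _, fun j => ?_⟩
    rw [hF j, Circle.coe_exp, mul_comm Complex.I]
    rfl

theorem starEquiv_iff_bohrEquiv_of_integralBasis_general {ι : Type*} (lam : ℕ → ℝ) (a b : ℕ → ℂ)
    (g : ι → ℝ) (hli : LinearIndependent ℚ g)
    (hint : ∀ j : ℕ, lam j ∈ Submodule.span ℤ (Set.range g)) :
    StarEquiv lam a b ↔ BohrEquivSeq lam a b := by
  rw [starEquiv_iff_forall_exists_linearMap, bohrEquivSeq_iff_exists_linearMap]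
  refine ⟨fun h => ?_, fun ⟨F, hF⟩ n => ⟨F, fun j _ => hF j⟩⟩
  have hlam : ∀ j, lam j ∈ AddSubgroup.closure (range g) := fun j => by
    rw [← Submodule.span_int_eq_addSubgroupClosure]
    exact hint j
  have hC : ∀ j, IsClosed {χ : ℝ → Circle | b j = a j * χ (lam j)} := fun j =>
    isClosed_eq continuous_const
      (continuous_const.mul (continuous_subtype_val.comp (continuous_apply (lam j))))
  have hstage : ∀ n, ∃ χ ∈ {χ : ℝ → Circle | IsAddCharOn (AddSubgroup.closure (range g)) χ},
      ∀ j < n, b j = a j * χ (lam j) := fun n =>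
    let ⟨F, hF⟩ := h n
    ⟨fun x => Circle.exp (F x), isAddCharOn_circleExp_comp F _, hF⟩
  obtain ⟨χ, hχ, hχlam⟩ :=
    (isClosed_setOf_isAddCharOn _).isCompact.exists_forall_mem_of_forall_exists_lt hC hstage
  obtain ⟨F, hF⟩ := IsAddCharOn.exists_linearMap_circleExp_eq hli hχ
  refine ⟨F, fun j => ?_⟩
  rw [hχlam j, ← hF (hlam j)]

/-- If the set of exponents admits an integral basis (a `ℚ`-linearly independent family `g`
spanning the same `ℚ`-vector space as the exponents, such that every exponent is a
`ℤ`-linear combination of the `g k`'s), then `*∼`-equivalence coincides with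
Bohr equivalence. -/
theorem starEquiv_iff_bohrEquiv_of_integralBasis {ι : Type*} (lam : ℕ → ℝ) (a b : ℕ → ℂ)
    (g : ι → ℝ) (hli : LinearIndependent ℚ g)
    (hspan : Submodule.span ℚ (Set.range g) = Submodule.span ℚ (Set.range lam))
    (hint : ∀ j : ℕ, lam j ∈ Submodule.span ℤ (Set.range g)) :
    StarEquiv lam a b ↔ BohrEquivSeq lam a b :=
  starEquiv_iff_bohrEquiv_of_integralBasis_general lam a b g hli hint
end
end

section
/- For the exponent set λⱼ = 2j − 1 + 1/(2(2j−1)), j = 1, 2, …, the constant coefficient sequences aⱼ = 1 and bⱼ = −1 are *∼-equivalent: for each n there exists a ℚ-linear map ψₙ on the ℚ-span of {λ₁,…,λₙ} with e^{iψₙ(λⱼ)} = −1 for j = 1,…,n. -/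
/-!
Take `ψₙ` to be the inclusion into `ℝ` scaled by `2πM`, where `M = 1 · 3 ⋯ (2n − 1)`.
Writing `M = (2j − 1) Q`, we get `2M λⱼ = 2M(2j − 1) + Q`, which is odd because `Q` is,
so `ψₙ(λⱼ)` is an odd multiple of `π` and `e^{iψₙ(λⱼ)} = −1`.
-/

noncomputable section

/-- The exponents `λⱼ = 2j − 1 + 1/(2(2j−1))`, `j = 1, 2, …` (here indexed by `ℕ` starting
from `0`, so `lam j` is the `(j+1)`-st exponent). -/
def lamEx (j : ℕ) : ℝ := (2 * (j : ℝ) + 1) + 1 / (2 * (2 * (j : ℝ) + 1))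

open Complex

lemma starEquiv_of_exp_mul {lam : ℕ → ℝ} {a b : ℕ → ℂ}
    (h : ∀ n, ∃ c : ℝ, ∀ j < n, b j = a j * exp (I * (c * lam j))) :
    StarEquiv lam a b := by
  intro n _
  obtain ⟨c, hc⟩ := h n
  exact ⟨c • (Submodule.span ℚ _).subtype, fun j hj => by simpa using hc j hj⟩

lemma exp_I_mul_mul_pi_of_odd {m : ℕ} (hm : Odd m) : exp (I * (m * Real.pi)) = -1 := by
  rw [show I * (m * Real.pi) = m * (Real.pi * I) by ring, exp_nat_mul, exp_pi_mul_I,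
    hm.neg_one_pow]

lemma odd_prod_two_mul_add_one (s : Finset ℕ) : Odd (∏ k ∈ s, (2 * k + 1)) :=
  Finset.prod_induction _ Odd (fun _ _ => Odd.mul) odd_one fun k _ => odd_two_mul_add_one k

lemma exists_odd_eq_two_mul_mul_lamEx {M j : ℕ} (hM : Odd M) (hj : 2 * j + 1 ∣ M) :
    ∃ m : ℕ, Odd m ∧ 2 * M * lamEx j = m := by
  obtain ⟨Q, rfl⟩ := hj
  refine ⟨2 * ((2 * j + 1) ^ 2 * Q) + Q, (even_two_mul _).add_odd (Nat.odd_mul.1 hM).2, ?_⟩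
  rw [lamEx]
  push_cast
  field_simp

/-- For the exponents `λⱼ = 2j − 1 + 1/(2(2j−1))`, the constant sequences `aⱼ = 1` and
`bⱼ = −1` are `*∼`-equivalent. -/
theorem starEquiv_one_negOne : StarEquiv lamEx (fun _ => (1 : ℂ)) (fun _ => (-1 : ℂ)) := by
  refine starEquiv_of_exp_mul fun n =>
    ⟨2 * Real.pi * ∏ k ∈ Finset.range n, (2 * k + 1 : ℕ), fun j hj => ?_⟩
  obtain ⟨m, hm, hlam⟩ := exists_odd_eq_two_mul_mul_lamEx
    (odd_prod_two_mul_add_one (Finset.range n)) (Finset.dvd_prod_of_mem _ (Finset.mem_range.2 hj))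
  rw [one_mul, ← exp_I_mul_mul_pi_of_odd hm, ← Complex.ofReal_natCast, ← hlam]
  congr 1
  push_cast
  ring
end
end
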